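/- Let V be a complex inner product space of dimension 5 with a fixed orthonormal basis e_1, …, e_5, and let ψ ∈ ⋀³V. Suppose U and U' are unitary operators on V and c_1 ≥ c_2 ≥ 0, c'_1 ≥ c'_2 ≥ 0 are real numbers such that (⋀³U) ψ = (c_1 · e_1 ∧ e_2 + c_2 · e_3 ∧ e_4) ∧ e_5 and (⋀³U') ψ = (c'_1 · e_1 ∧ e_2 + c'_2 · e_3 ∧ e_4) ∧ e_5. Then c_1 = c'_1 and c_2 = c'_2. -/

import Mathlib

open ExteriorAlgebra Finset

noncomputable section

/-- The single-particle Hilbert space: `ℂ^M` with its standard inner product. -/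
abbrev V (M : ℕ) : Type := EuclideanSpace ℂ (Fin M)

/-- The fixed orthonormal basis vector `e_n` (1-indexed, `1 ≤ n ≤ M`);
out-of-range indices give `0`. -/
def stdVec (M n : ℕ) : V M :=
  if h : 1 ≤ n ∧ n ≤ M then EuclideanSpace.single (⟨n - 1, by omega⟩ : Fin M) 1 else 0

/-- The wedge `e_{i 0} ∧ ⋯ ∧ e_{i (N-1)}` in the exterior algebra of `V M`. -/
def wedge (M N : ℕ) (i : Fin N → ℕ) : ExteriorAlgebra ℂ (V M) :=
  ExteriorAlgebra.ιMulti ℂ N fun j => stdVec M (i j)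

/-- `i` enumerates a strictly increasing sequence of indices in `{1, …, M}`. -/
def IsBasisIndex (M N : ℕ) (i : Fin N → ℕ) : Prop :=
  StrictMono i ∧ ∀ j, 1 ≤ i j ∧ i j ≤ M

/-- Single occupancy: no two of the indices lie in the same standard pair
`{2k-1, 2k}` (the pair of `n` is `(n+1)/2`). -/
def SingleOcc (N : ℕ) (i : Fin N → ℕ) : Prop :=
  ∀ j k : Fin N, j ≠ k → (i j + 1) / 2 ≠ (i k + 1) / 2

/-- The single occupancy subspace `𝒮 ⊆ ⋀^N V`: the span of all basic single
occupancy vectors. -/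
def SOV (M N : ℕ) : Submodule ℂ (ExteriorAlgebra ℂ (V M)) :=
  Submodule.span ℂ
    {x | ∃ i : Fin N → ℕ, IsBasisIndex M N i ∧ SingleOcc N i ∧ x = wedge M N i}

/-- The exterior power of a unitary operator `U` on `V M`, acting on the whole
exterior algebra (on `⋀^N V` it acts as `⋀^N U`). -/
def luMap (M : ℕ) (U : V M ≃ₗᵢ[ℂ] V M) :
    ExteriorAlgebra ℂ (V M) →ₐ[ℂ] ExteriorAlgebra ℂ (V M) :=
  ExteriorAlgebra.map U.toLinearEquiv.toLinearMap

/-!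
Pairing a 3-vector `φ` with `e_i ∧ e_j` and reading off the `e₁ ∧ ⋯ ∧ e₅`-coefficient gives a
`5 × 5` matrix `N(φ)` (the Hodge dual of `φ`). A linear automorphism `f` turns it into
`det f • Aᵀ N(φ) A`, with `A` the matrix of `f⁻¹`; for unitary `f` this makes `N Nᴴ` unitarily
conjugate to its old value, so the traces of its powers are invariants. For the canonical form
`N Nᴴ = diag(c₂², c₂², c₁², c₁², 0)`, and the first two power sums of `c₁² ≥ c₂²` determine them.
-/

open scoped Matrix

theorem Module.Basis.det_comp_self {ι R M : Type*} [CommRing R] [AddCommGroup M] [Module R M]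
    [Fintype ι] [DecidableEq ι] (b : Module.Basis ι R M) (σ : ι → ι) :
    b.det (b ∘ σ) =
      if h : σ.Bijective then (Equiv.Perm.sign (Equiv.ofBijective σ h) : R) else 0 := by
  split_ifs with h
  · rw [show b ∘ σ = b ∘ Equiv.ofBijective σ h from rfl, AlternatingMap.map_perm, det_self,
      Units.smul_def, zsmul_one]
  · obtain ⟨i, j, hσ, hij⟩ :=
      Function.not_injective_iff.mp (Finite.injective_iff_bijective.not.mpr h)
    exact b.det.map_eq_zero_of_eq _ (congrArg b hσ) hij

namespace Matrix

variable {n α : Type*} [Fintype n] [DecidableEq n] [CommRing α] [StarRing α]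

theorem trace_pow_unitary_conj {U : Matrix n n α} (hU : U ∈ unitaryGroup n α) (P : Matrix n n α)
    (k : ℕ) : trace ((U * P * star U) ^ k) = trace (P ^ k) := by
  let u : (Matrix n n α)ˣ :=
    ⟨U, star U, Unitary.mul_star_self_of_mem hU, Unitary.star_mul_self_of_mem hU⟩
  exact (Units.conj_pow u P k).symm ▸ trace_units_conj u (P ^ k)

theorem trace_pow_mul_conjTranspose_unitary_congr {d : α} (hd : d ∈ unitary α)
    {A : Matrix n n α} (hA : A ∈ unitaryGroup n α) (N : Matrix n n α) (k : ℕ) :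
    trace ((d • (Aᵀ * N * A) * (d • (Aᵀ * N * A))ᴴ) ^ k) = trace ((N * Nᴴ) ^ k) := by
  have hA_mul : A * Aᴴ = 1 := Unitary.mul_star_self_of_mem hA
  have hconj : d • (Aᵀ * N * A) * (d • (Aᵀ * N * A))ᴴ = Aᵀ * (N * Nᴴ) * star Aᵀ := by
    rw [conjTranspose_smul, smul_mul_smul_comm, Unitary.mul_star_self_of_mem hd, one_smul,
      conjTranspose_mul, conjTranspose_mul, star_eq_conjTranspose]
    calc Aᵀ * N * A * (Aᴴ * (Nᴴ * Aᵀᴴ)) = Aᵀ * N * (A * Aᴴ) * Nᴴ * Aᵀᴴ := by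
          simp only [Matrix.mul_assoc]
      _ = Aᵀ * (N * Nᴴ) * Aᵀᴴ := by rw [hA_mul, Matrix.mul_one]; simp only [Matrix.mul_assoc]
  rw [hconj, trace_pow_unitary_conj (transpose_mem_unitaryGroup_iff.mpr hA)]

end Matrix

theorem eq_and_eq_of_add_eq_of_sq_add_sq_eq {K : Type*} [Field K] [LinearOrder K]
    [IsStrictOrderedRing K] {x y x' y' : K} (h : y ≤ x) (h' : y' ≤ x')
    (hsum : x + y = x' + y') (hsq : x ^ 2 + y ^ 2 = x' ^ 2 + y' ^ 2) : x = x' ∧ y = y' := by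
  have hdiff_sq : (x - y) ^ 2 = (x' - y') ^ 2 := by
    linear_combination 2 * hsq - (x + y + x' + y') * hsum
  have hdiff : x - y = x' - y' := (sq_eq_sq₀ (sub_nonneg.mpr h) (sub_nonneg.mpr h')).mp hdiff_sq
  constructor <;> linarith

namespace ExteriorAlgebra

section Pairing

variable {R M : Type*} [CommRing R] [AddCommGroup M] [Module R M] {n : ℕ}
  (b : Module.Basis (Fin n) R M)

def topCoeff : ExteriorAlgebra R M →ₗ[R] R :=
  liftAlternating fun k => if h : k = n then h ▸ b.det else 0

theorem topCoeff_ιMulti (v : Fin n → M) : topCoeff b (ιMulti R n v) = b.det v := by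
  simp [topCoeff, liftAlternating_apply_ιMulti]

theorem topCoeff_ιMulti_of_ne {k : ℕ} (hk : k ≠ n) (v : Fin k → M) :
    topCoeff b (ιMulti R k v) = 0 := by
  simp [topCoeff, liftAlternating_apply_ιMulti, hk]

theorem topCoeff_map (f : M →ₗ[R] M) (x : ExteriorAlgebra R M) :
    topCoeff b (map f x) = LinearMap.det f * topCoeff b x := by
  have hx : x ∈ Submodule.span R (Set.range fun y : Σ k, (Fin k → M) => ιMulti R y.1 y.2) :=
    ιMulti_span R M ▸ Submodule.mem_top
  induction hx using Submodule.span_induction with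
  | mem x hx =>
    obtain ⟨⟨k, v⟩, rfl⟩ := hx
    rw [map_apply_ιMulti]
    by_cases hk : k = n
    · subst hk
      rw [topCoeff_ιMulti, topCoeff_ιMulti, Module.Basis.det_comp]
    · rw [topCoeff_ιMulti_of_ne b hk, topCoeff_ιMulti_of_ne b hk, mul_zero]
  | zero => simp only [map_zero, mul_zero]
  | add x y _ _ hx hy => simp only [map_add, hx, hy, mul_add]
  | smul c x _ hx => simp only [map_smul, hx, smul_eq_mul]; ring

def pairingMatrix (φ : ExteriorAlgebra R M) : Matrix (Fin n) (Fin n) R :=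
  .of fun i j => topCoeff b (ι R (b i) * ι R (b j) * φ)

open Matrix in
theorem pairingMatrix_map (f : M ≃ₗ[R] M) (φ : ExteriorAlgebra R M) :
    pairingMatrix b (map (f : M →ₗ[R] M) φ) =
      LinearMap.det (f : M →ₗ[R] M) • ((LinearMap.toMatrix b b f.symm)ᵀ * pairingMatrix b φ *
        LinearMap.toMatrix b b f.symm) := by
  set A := LinearMap.toMatrix b b f.symm
  have hexp : ∀ i, ι R (f.symm (b i)) = ∑ k, A k i • ι R (b k) := fun i => by
    have : f.symm (b i) = ∑ k, A k i • b k := by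
      simp only [A, LinearMap.toMatrix_apply, LinearEquiv.coe_coe]
      exact (b.sum_repr _).symm
    simp only [this, map_sum, map_smul]
  ext i j
  have hmul : ι R (b i) * ι R (b j) * map (f : M →ₗ[R] M) φ =
      map (f : M →ₗ[R] M) (ι R (f.symm (b i)) * ι R (f.symm (b j)) * φ) := by
    simp only [map_mul, map_apply_ι, LinearEquiv.coe_coe, LinearEquiv.apply_symm_apply]
  simp only [pairingMatrix, of_apply, hmul, topCoeff_map, hexp, Matrix.smul_apply, mul_apply,
    transpose_apply, smul_eq_mul, Finset.sum_mul, Finset.mul_sum, smul_mul_assoc, mul_smul_comm,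
    map_sum, map_smul]
  exact Finset.sum_congr rfl fun k _ => Finset.sum_congr rfl fun l _ => by ring

def pairingGram [StarRing R] (φ : ExteriorAlgebra R M) : Matrix (Fin n) (Fin n) R :=
  pairingMatrix b φ * (pairingMatrix b φ)ᴴ

end Pairing

theorem trace_pow_pairingGram_map_linearIsometryEquiv {𝕜 E : Type*} [RCLike 𝕜]
    [NormedAddCommGroup E] [InnerProductSpace 𝕜 E] {n : ℕ} (b : OrthonormalBasis (Fin n) 𝕜 E)
    (W : E ≃ₗᵢ[𝕜] E) (φ : ExteriorAlgebra 𝕜 E) (k : ℕ) :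
    (pairingGram b.toBasis (map W.toLinearEquiv.toLinearMap φ) ^ k).trace =
      (pairingGram b.toBasis φ ^ k).trace := by
  have hdet : LinearMap.det W.toLinearEquiv.toLinearMap ∈ unitary 𝕜 := by
    rw [← LinearMap.det_toMatrix b.toBasis]
    exact Matrix.det_of_mem_unitary (W.toMatrix_mem_unitaryGroup b b)
  rw [pairingGram, pairingMatrix_map]
  exact Matrix.trace_pow_mul_conjTranspose_unitary_congr hdet
    (W.symm.toMatrix_mem_unitaryGroup b b) _ k

end ExteriorAlgebra

theorem stdVec_succ {M : ℕ} (k : Fin M) :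
    stdVec M (k + 1) = EuclideanSpace.basisFun (Fin M) ℂ k := by
  simp [stdVec]

def canonicalForm (c₁ c₂ : ℝ) : ExteriorAlgebra ℂ (V 5) :=
  ((c₁ : ℂ) • (ExteriorAlgebra.ι ℂ (stdVec 5 1) * ExteriorAlgebra.ι ℂ (stdVec 5 2)) +
    (c₂ : ℂ) • (ExteriorAlgebra.ι ℂ (stdVec 5 3) * ExteriorAlgebra.ι ℂ (stdVec 5 4))) *
    ExteriorAlgebra.ι ℂ (stdVec 5 5)

open Matrix in
theorem pairingMatrix_canonicalForm (c₁ c₂ : ℝ) :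
    pairingMatrix (EuclideanSpace.basisFun (Fin 5) ℂ).toBasis (canonicalForm c₁ c₂) =
      !![0, (c₂ : ℂ), 0, 0, 0; -c₂, 0, 0, 0, 0; 0, 0, 0, c₁, 0; 0, 0, -c₁, 0, 0;
        0, 0, 0, 0, 0] := by
  set B := (EuclideanSpace.basisFun (Fin 5) ℂ).toBasis
  have hcanon : canonicalForm c₁ c₂ = (c₁ : ℂ) • (ι ℂ (B 0) * ι ℂ (B 1) * ι ℂ (B 4)) +
      (c₂ : ℂ) • (ι ℂ (B 2) * ι ℂ (B 3) * ι ℂ (B 4)) := by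
    rw [canonicalForm, show stdVec 5 1 = B 0 from stdVec_succ 0, show stdVec 5 2 = B 1 from
      stdVec_succ 1, show stdVec 5 3 = B 2 from stdVec_succ 2, show stdVec 5 4 = B 3 from
      stdVec_succ 3, show stdVec 5 5 = B 4 from stdVec_succ 4, add_mul, smul_mul_assoc,
      smul_mul_assoc]
  have hwedge : ∀ σ : Fin 5 → Fin 5, ιMulti ℂ 5 (B ∘ σ) = ι ℂ (B (σ 0)) * ι ℂ (B (σ 1)) *
      (ι ℂ (B (σ 2)) * ι ℂ (B (σ 3)) * ι ℂ (B (σ 4))) := by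
    intro σ
    simp only [ιMulti_succ_apply, ιMulti_zero_apply, mul_one, mul_assoc]
    rfl
  have hentry : ∀ i j, pairingMatrix B (canonicalForm c₁ c₂) i j =
      c₁ * B.det (B ∘ ![i, j, 0, 1, 4]) + c₂ * B.det (B ∘ ![i, j, 2, 3, 4]) := fun i j => by
    rw [← topCoeff_ιMulti, ← topCoeff_ιMulti, hwedge, hwedge, pairingMatrix, of_apply, hcanon,
      mul_add, mul_smul_comm, mul_smul_comm, map_add, map_smul, map_smul]
    simp
  have s₁ : Equiv.Perm.sign (Equiv.ofBijective ![0, 1, 2, 3, 4] (by decide)) = 1 := by decide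
  have s₂ : Equiv.Perm.sign (Equiv.ofBijective ![1, 0, 2, 3, 4] (by decide)) = -1 := by decide
  have s₃ : Equiv.Perm.sign (Equiv.ofBijective ![2, 3, 0, 1, 4] (by decide)) = 1 := by decide
  have s₄ : Equiv.Perm.sign (Equiv.ofBijective ![3, 2, 0, 1, 4] (by decide)) = -1 := by decide
  ext i j
  fin_cases i <;> fin_cases j <;> simp +decide [hentry, Module.Basis.det_comp_self, s₁, s₂, s₃, s₄]

open Matrix in
theorem trace_pow_pairingGram_canonicalForm (c₁ c₂ : ℝ) {k : ℕ} (hk : k ≠ 0) :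
    (pairingGram (EuclideanSpace.basisFun (Fin 5) ℂ).toBasis (canonicalForm c₁ c₂) ^ k).trace =
      2 * (((c₁ ^ 2) ^ k + (c₂ ^ 2) ^ k : ℝ) : ℂ) := by
  have hdiag : pairingGram (EuclideanSpace.basisFun (Fin 5) ℂ).toBasis (canonicalForm c₁ c₂) =
      diagonal ![(c₂ : ℂ) ^ 2, (c₂ : ℂ) ^ 2, (c₁ : ℂ) ^ 2, (c₁ : ℂ) ^ 2, 0] := by
    rw [pairingGram, pairingMatrix_canonicalForm]
    ext i j
    fin_cases i <;> fin_cases j <;> simp [mul_apply, Fin.sum_univ_five, sq]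
  rw [hdiag, diagonal_pow, trace_diagonal, Fin.sum_univ_five]
  simp only [Pi.pow_apply, cons_val_zero, cons_val_one, Matrix.cons_val, zero_pow hk, add_zero,
    Complex.ofReal_add, Complex.ofReal_pow]
  ring

theorem three_vector_dim5_canonical_form_unique_general
    (ψ : ExteriorAlgebra ℂ (V 5))
    (U U' : V 5 ≃ₗᵢ[ℂ] V 5) (c₁ c₂ c₁' c₂' : ℝ)
    (h1 : c₂ ≤ c₁) (h2 : 0 ≤ c₂) (h1' : c₂' ≤ c₁') (h2' : 0 ≤ c₂')
    (hform : luMap 5 U ψ =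
      ((c₁ : ℂ) • (ExteriorAlgebra.ι ℂ (stdVec 5 1) * ExteriorAlgebra.ι ℂ (stdVec 5 2)) +
       (c₂ : ℂ) • (ExteriorAlgebra.ι ℂ (stdVec 5 3) * ExteriorAlgebra.ι ℂ (stdVec 5 4))) *
      ExteriorAlgebra.ι ℂ (stdVec 5 5))
    (hform' : luMap 5 U' ψ =
      ((c₁' : ℂ) • (ExteriorAlgebra.ι ℂ (stdVec 5 1) * ExteriorAlgebra.ι ℂ (stdVec 5 2)) +
       (c₂' : ℂ) • (ExteriorAlgebra.ι ℂ (stdVec 5 3) * ExteriorAlgebra.ι ℂ (stdVec 5 4))) *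
      ExteriorAlgebra.ι ℂ (stdVec 5 5)) :
    c₁ = c₁' ∧ c₂ = c₂' := by
  set B := EuclideanSpace.basisFun (Fin 5) ℂ
  have hpow : ∀ k ≠ 0, (c₁ ^ 2) ^ k + (c₂ ^ 2) ^ k = (c₁' ^ 2) ^ k + (c₂' ^ 2) ^ k := by
    intro k hk
    have hinv : (pairingGram B.toBasis (canonicalForm c₁ c₂) ^ k).trace =
        (pairingGram B.toBasis (canonicalForm c₁' c₂') ^ k).trace := by
      rw [canonicalForm, canonicalForm, ← hform, ← hform', luMap, luMap,
        trace_pow_pairingGram_map_linearIsometryEquiv,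
        trace_pow_pairingGram_map_linearIsometryEquiv]
    rw [trace_pow_pairingGram_canonicalForm _ _ hk, trace_pow_pairingGram_canonicalForm _ _ hk]
      at hinv
    exact_mod_cast mul_left_cancel₀ two_ne_zero hinv
  obtain ⟨hsq₁, hsq₂⟩ := eq_and_eq_of_add_eq_of_sq_add_sq_eq (by gcongr) (by gcongr)
    (by simpa using hpow 1 one_ne_zero) (hpow 2 two_ne_zero)
  exact ⟨(sq_eq_sq₀ (h2.trans h1) (h2'.trans h1')).mp hsq₁, (sq_eq_sq₀ h2 h2').mp hsq₂⟩

/-- (Uniqueness of the canonical form for 3-vectors in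
dimension 5.) If `ψ ∈ ⋀³ V`, `dim V = 5`, is LU-equivalent to both
`(c₁ · e₁ ∧ e₂ + c₂ · e₃ ∧ e₄) ∧ e₅` and `(c'₁ · e₁ ∧ e₂ + c'₂ · e₃ ∧ e₄) ∧ e₅`
with `c₁ ≥ c₂ ≥ 0` and `c'₁ ≥ c'₂ ≥ 0`, then `c₁ = c'₁` and `c₂ = c'₂`. -/
theorem three_vector_dim5_canonical_form_unique
    (ψ : ExteriorAlgebra ℂ (V 5)) (hψ : ψ ∈ ⋀[ℂ]^3 (V 5))
    (U U' : V 5 ≃ₗᵢ[ℂ] V 5) (c₁ c₂ c₁' c₂' : ℝ)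
    (h1 : c₂ ≤ c₁) (h2 : 0 ≤ c₂) (h1' : c₂' ≤ c₁') (h2' : 0 ≤ c₂')
    (hform : luMap 5 U ψ =
      ((c₁ : ℂ) • (ExteriorAlgebra.ι ℂ (stdVec 5 1) * ExteriorAlgebra.ι ℂ (stdVec 5 2)) +
       (c₂ : ℂ) • (ExteriorAlgebra.ι ℂ (stdVec 5 3) * ExteriorAlgebra.ι ℂ (stdVec 5 4))) *
      ExteriorAlgebra.ι ℂ (stdVec 5 5))
    (hform' : luMap 5 U' ψ =
      ((c₁' : ℂ) • (ExteriorAlgebra.ι ℂ (stdVec 5 1) * ExteriorAlgebra.ι ℂ (stdVec 5 2)) +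
       (c₂' : ℂ) • (ExteriorAlgebra.ι ℂ (stdVec 5 3) * ExteriorAlgebra.ι ℂ (stdVec 5 4))) *
      ExteriorAlgebra.ι ℂ (stdVec 5 5)) :
    c₁ = c₁' ∧ c₂ = c₂' :=
  three_vector_dim5_canonical_form_unique_general ψ U U' c₁ c₂ c₁' c₂' h1 h2 h1' h2' hform hform'
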